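/- Let μ ∈ ℍ be a pure unit quaternion (μ has zero real part and |μ| = 1, so μ² = −1). Let f : ℝ → ℍ with ∫_ℝ |f(x)| dx < ∞, and define 𝓕(w) = ∫_ℝ f(x) e^{−μ x w} dx. If ∫_ℝ |𝓕(w)| dw < ∞, then f(x) = (1/(2π)) ∫_ℝ 𝓕(w) e^{μ x w} dw for almost every x ∈ ℝ. -/

import Mathlib

open MeasureTheory Filter Real Set
open scoped Quaternion Topology

noncomputable section

def qi : ℍ[ℝ] := ⟨0,1,0,0⟩
def qj : ℍ[ℝ] := ⟨0,0,1,0⟩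

/-- `e^{μθ} = cos θ + μ sin θ` for a (pure unit) quaternion `μ`. -/
def qexp (μ : ℍ[ℝ]) (θ : ℝ) : ℍ[ℝ] := (Real.cos θ : ℍ[ℝ]) + Real.sin θ • μ

/-- One-dimensional quaternion Fourier transform with respect to a pure unit quaternion `μ`. -/
def QFT1 (μ : ℍ[ℝ]) (f : ℝ → ℍ[ℝ]) (w : ℝ) : ℍ[ℝ] :=
  ∫ x : ℝ, f x * qexp μ (-(x * w))

/-!
For a real functional `c` on `ℍ`, the map `L x = c x - i c (x μ)` into `ℂ` is real-linear and,
because `μ² = -1`, turns right multiplication by `e^{μθ}` into multiplication by `e^{iθ}`. So `L`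
carries the quaternion transform of `f` to the (angular-frequency) Fourier transform of `L ∘ f`,
and complex Fourier inversion gives `c (f x) = Re L (f x) = c (RHS x)` for a.e. `x`; as the
functionals separate the points of `ℍ`, `f = RHS` a.e. The a.e. form of complex Fourier inversion
comes from Parseval's identity tested against the Schwartz functions `𝓕⁻ φ`, `φ` smooth with
compact support.
-/

open Complex
open scoped FourierTransform SchwartzMap

section FourierInversion

variable {V E : Type*} [NormedAddCommGroup V] [InnerProductSpace ℝ V] [FiniteDimensional ℝ V]
  [MeasurableSpace V] [BorelSpace V] [NormedAddCommGroup E] [NormedSpace ℂ E]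

theorem Real.continuous_fourierInv {g : V → E} (hg : Integrable g) : Continuous (𝓕⁻ g) :=
  VectorFourier.fourierIntegral_continuous Real.continuous_fourierChar continuous_inner.neg hg

variable [CompleteSpace E]

theorem Real.integral_fourier_smul_eq {f : V → ℂ} {g : V → E} (hf : Integrable f)
    (hg : Integrable g) : ∫ ξ, 𝓕 f ξ • g ξ = ∫ x, f x • 𝓕 g x := by
  have := VectorFourier.integral_fourierIntegral_smul_eq_flip (L := innerₗ V)
    Real.continuous_fourierChar continuous_inner hf hg
  rwa [flip_innerₗ] at this

theorem Real.integral_fourierInv_smul_eq {f : V → ℂ} {g : V → E} (hf : Integrable f)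
    (hg : Integrable g) : ∫ ξ, 𝓕⁻ f ξ • g ξ = ∫ x, f x • 𝓕⁻ g x := by
  have := VectorFourier.integral_fourierIntegral_smul_eq_flip (L := -innerₗ V)
    Real.continuous_fourierChar continuous_inner.neg hf hg
  rwa [show (-innerₗ V).flip = -innerₗ V by ext; simp [real_inner_comm]] at this

theorem MeasureTheory.Integrable.ae_eq_fourierInv_fourier {g : V → E} (hg : Integrable g)
    (hG : Integrable (𝓕 g)) : g =ᵐ[volume] 𝓕⁻ (𝓕 g) := by
  refine ae_eq_of_integral_contDiff_smul_eq hg.locallyIntegrable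
    (Real.continuous_fourierInv hG).locallyIntegrable fun φ hφ hφc => ?_
  let φS : 𝓢(V, ℂ) := (hφc.comp_left Complex.ofReal_zero).toSchwartzMap
    (Complex.ofRealCLM.contDiff.comp hφ)
  have hφS : 𝓕 (𝓕⁻ (φS : V → ℂ)) = fun x => (φ x : ℂ) := by
    rw [← SchwartzMap.fourierInv_coe, ← SchwartzMap.fourier_coe,
      FourierInvPair.fourier_fourierInv_eq]
    rfl
  have hψ : Integrable (𝓕⁻ (φS : V → ℂ)) := by
    rw [← SchwartzMap.fourierInv_coe]
    exact SchwartzMap.integrable _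
  simp_rw [← Complex.coe_smul]
  calc ∫ x, (φ x : ℂ) • g x = ∫ x, 𝓕⁻ (φS : V → ℂ) x • 𝓕 g x := by
        rw [← Real.integral_fourier_smul_eq hψ hg, hφS]
    _ = ∫ x, (φ x : ℂ) • 𝓕⁻ (𝓕 g) x := Real.integral_fourierInv_smul_eq φS.integrable hG

end FourierInversion

section AngularFourier

variable {E : Type*} [NormedAddCommGroup E] [NormedSpace ℂ E]

def angularFourier (h : ℝ → E) (w : ℝ) : E :=
  ∫ y : ℝ, cexp (↑(-(y * w)) * I) • h y

theorem Real.fourier_eq_angularFourier (h : ℝ → E) (u : ℝ) :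
    𝓕 h u = angularFourier h (2 * π * u) := by
  rw [Real.fourier_real_eq_integral_exp_smul, angularFourier]
  congr 1 with v
  ring_nf

theorem Real.fourierInv_comp_two_pi_mul (H : ℝ → E) (x : ℝ) :
    𝓕⁻ (fun u => H (2 * π * u)) x = (1 / (2 * π)) • ∫ w : ℝ, cexp (↑(x * w) * I) • H w := by
  have hscale := Measure.integral_comp_mul_left (fun w => cexp (↑(x * w) * I) • H w) (2 * π)
  rw [abs_of_pos (by positivity), ← one_div] at hscale
  rw [Real.fourierInv_eq', ← hscale]
  congr 1 with u
  simp only [RCLike.inner_apply, conj_trivial]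
  ring_nf

theorem MeasureTheory.Integrable.ae_eq_integral_angularFourier [CompleteSpace E] {h : ℝ → E}
    (hh : Integrable h) (hH : Integrable (angularFourier h)) :
    ∀ᵐ x : ℝ, h x = (1 / (2 * π)) • ∫ w : ℝ, cexp (↑(x * w) * I) • angularFourier h w := by
  have hF : 𝓕 h = fun u => angularFourier h (2 * π * u) :=
    funext (Real.fourier_eq_angularFourier h)
  have hFint : Integrable (𝓕 h) := hF ▸ hH.comp_mul_left' (by positivity)
  filter_upwards [hh.ae_eq_fourierInv_fourier hFint] with x hx
  rw [hx, hF, Real.fourierInv_comp_two_pi_mul]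

end AngularFourier

theorem MeasureTheory.ae_eq_of_forall_dual {α E : Type*} [MeasurableSpace α] {ν : Measure α}
    [NormedAddCommGroup E] [NormedSpace ℝ E] [SecondCountableTopology E] {f g : α → E}
    (h : ∀ c : StrongDual ℝ E, ∀ᵐ x ∂ν, c (f x) = c (g x)) : f =ᵐ[ν] g := by
  have hsub : f - g =ᵐ[ν] 0 := ae_eq_zero_of_forall_dual ℝ fun c => by
    filter_upwards [h c] with x hx
    simp [hx]
  filter_upwards [hsub] with x hx using sub_eq_zero.mp hx

section RightComplexify

variable {A : Type*} [NormedRing A] [NormedAlgebra ℝ A]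

def rightComplexify (μ : A) (c : StrongDual ℝ A) : A →L[ℝ] ℂ :=
  Complex.equivRealProdCLM.symm.toContinuousLinearMap ∘L
    c.prod (-(c ∘L (ContinuousLinearMap.mul ℝ A).flip μ))

@[simp] theorem re_rightComplexify (μ : A) (c : StrongDual ℝ A) (x : A) :
    (rightComplexify μ c x).re = c x := rfl

@[simp] theorem im_rightComplexify (μ : A) (c : StrongDual ℝ A) (x : A) :
    (rightComplexify μ c x).im = -c (x * μ) := rfl

theorem rightComplexify_mul_self {μ : A} (hμ : μ * μ = -1) (c : StrongDual ℝ A) (x : A) :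
    rightComplexify μ c (x * μ) = I * rightComplexify μ c x := by
  apply Complex.ext <;> simp [mul_assoc, hμ]

end RightComplexify

theorem Quaternion.mul_self_eq_neg_one {μ : ℍ[ℝ]} (hre : μ.re = 0) (hnorm : ‖μ‖ = 1) :
    μ * μ = -1 := by
  rw [← sq, Quaternion.sq_eq_neg_normSq.mpr hre, Quaternion.normSq_eq_norm_mul_self, hnorm]
  simp

theorem norm_qexp_le (μ : ℍ[ℝ]) (θ : ℝ) : ‖qexp μ θ‖ ≤ 1 + ‖μ‖ := by
  refine (norm_add_le _ _).trans (add_le_add ?_ ?_)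
  · rw [Quaternion.norm_coe, Real.norm_eq_abs]
    exact abs_cos_le_one θ
  · rw [norm_smul, Real.norm_eq_abs]
    exact mul_le_of_le_one_left (norm_nonneg μ) (abs_sin_le_one θ)

theorem continuous_qexp (μ : ℍ[ℝ]) : Continuous (qexp μ) :=
  (Quaternion.continuous_coe.comp continuous_cos).add (continuous_sin.smul continuous_const)

theorem MeasureTheory.Integrable.mul_qexp {α : Type*} [MeasurableSpace α] {ν : Measure α}
    {f : α → ℍ[ℝ]} (hf : Integrable f ν) (μ : ℍ[ℝ]) {φ : α → ℝ}
    (hφ : AEStronglyMeasurable φ ν) : Integrable (fun x => f x * qexp μ (φ x)) ν :=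
  hf.mul_bdd ((continuous_qexp μ).comp_aestronglyMeasurable hφ)
    (.of_forall fun x => norm_qexp_le μ (φ x))

theorem rightComplexify_mul_qexp {μ : ℍ[ℝ]} (hμ : μ * μ = -1) (c : StrongDual ℝ ℍ[ℝ])
    (x : ℍ[ℝ]) (θ : ℝ) :
    rightComplexify μ c (x * qexp μ θ) = cexp (θ * I) * rightComplexify μ c x := by
  have hsplit : x * qexp μ θ = Real.cos θ • x + Real.sin θ • (x * μ) := by
    rw [qexp, mul_add, Quaternion.mul_coe_eq_smul, mul_smul_comm]
  rw [hsplit, map_add, map_smul, map_smul, rightComplexify_mul_self hμ, exp_mul_I,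
    ← ofReal_cos, ← ofReal_sin]
  simp only [Complex.real_smul]
  ring

theorem rightComplexify_integral_mul_qexp {μ : ℍ[ℝ]} (hμ : μ * μ = -1) (c : StrongDual ℝ ℍ[ℝ])
    {F : ℝ → ℍ[ℝ]} (hF : Integrable F) {φ : ℝ → ℝ} (hφ : AEStronglyMeasurable φ) :
    rightComplexify μ c (∫ w, F w * qexp μ (φ w)) =
      ∫ w, cexp (φ w * I) • rightComplexify μ c (F w) := by
  rw [← ContinuousLinearMap.integral_comp_comm _ (hF.mul_qexp μ hφ)]
  simp_rw [rightComplexify_mul_qexp hμ, smul_eq_mul]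

theorem rightComplexify_QFT1 {μ : ℍ[ℝ]} (hμ : μ * μ = -1) (c : StrongDual ℝ ℍ[ℝ])
    {f : ℝ → ℍ[ℝ]} (hf : Integrable f) (w : ℝ) :
    rightComplexify μ c (QFT1 μ f w) = angularFourier (fun x => rightComplexify μ c (f x)) w :=
  rightComplexify_integral_mul_qexp hμ c hf (by fun_prop)

/-- 1D inversion theorem: an integrable `f : ℝ → ℍ` with integrable `μ`-Fourier transform
is recovered a.e. from it. -/
theorem qft_1d_inversion
    (μ : ℍ[ℝ]) (hμre : μ.re = 0) (hμnorm : ‖μ‖ = 1)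
    (f : ℝ → ℍ[ℝ]) (hf : Integrable f)
    (hF : Integrable (QFT1 μ f)) :
    ∀ᵐ x : ℝ, f x = (1 / (2 * π)) • ∫ w : ℝ, QFT1 μ f w * qexp μ (x * w) := by
  have hμ : μ * μ = -1 := Quaternion.mul_self_eq_neg_one hμre hμnorm
  refine ae_eq_of_forall_dual fun c => ?_
  let L := rightComplexify μ c
  have hLF : (fun w => L (QFT1 μ f w)) = angularFourier (fun x => L (f x)) :=
    funext (rightComplexify_QFT1 hμ c hf)
  have hinv := (L.integrable_comp hf).ae_eq_integral_angularFourier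
    (hLF ▸ L.integrable_comp hF)
  filter_upwards [hinv] with x hx
  rw [← re_rightComplexify μ c, ← re_rightComplexify μ c, hx, map_smul,
    rightComplexify_integral_mul_qexp hμ c hF (by fun_prop), ← hLF]
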